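/- arXiv:0911.0623 — 8 statements merged into one kernel-verified Lean document; each statement's English description precedes it below -/
import Mathlib

section
/- Let f : 𝔻 → 𝔻 be a holomorphic map of the open unit disk into itself (not necessarily injective). Then for every r with 0 < r < 1, the area of f(𝔻_r) satisfies |f(𝔻_r)| ≤ |𝔻_r| = πr². -/
open MeasureTheory Metric Set ComplexConjugate

/-! Let `a = f 0`. By the Schwarz–Pick lemma, `f` maps `𝔻_r` into the pseudo-hyperbolic disc
`{w : |w - a| < r |1 - ā w|}`, which is the Euclidean disc with centre
`(1 - r²) a / (1 - r² |a|²)` and radius `r (1 - |a|²) / (1 - r² |a|²) ≤ r`. -/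

namespace Complex

/-- The automorphism of the unit disc exchanging `a` and `0`. -/
noncomputable def discMoebius (a w : ℂ) : ℂ := (w - a) / (1 - conj a * w)

theorem discMoebius_self (a : ℂ) : discMoebius a a = 0 := by
  simp [discMoebius]

theorem sq_norm_one_sub_conj_mul_sub_sq_norm_sub (a w : ℂ) :
    ‖1 - conj a * w‖ ^ 2 - ‖w - a‖ ^ 2 = (1 - ‖a‖ ^ 2) * (1 - ‖w‖ ^ 2) := by
  simp only [Complex.sq_norm, normSq_apply, sub_re, sub_im, mul_re, mul_im, conj_re, conj_im,
    one_re, one_im]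
  ring

theorem one_sub_conj_mul_ne_zero {a w : ℂ} (ha : ‖a‖ < 1) (hw : ‖w‖ ≤ 1) :
    1 - conj a * w ≠ 0 := by
  refine sub_ne_zero.2 fun h => ?_
  have : ‖conj a * w‖ < 1 := by
    rw [norm_mul, norm_conj]
    exact mul_lt_one_of_nonneg_of_lt_one_left (norm_nonneg a) ha hw
  simp [← h] at this

theorem norm_discMoebius_lt_one {a w : ℂ} (ha : ‖a‖ < 1) (hw : ‖w‖ < 1) :
    ‖discMoebius a w‖ < 1 := by
  have hden : 0 < ‖1 - conj a * w‖ := norm_pos_iff.2 (one_sub_conj_mul_ne_zero ha hw.le)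
  rw [discMoebius, norm_div, div_lt_one hden]
  refine (pow_lt_pow_iff_left₀ (norm_nonneg _) hden.le two_ne_zero).1 ?_
  have ha2 : ‖a‖ ^ 2 < 1 := pow_lt_one₀ (norm_nonneg a) ha two_ne_zero
  have hw2 : ‖w‖ ^ 2 < 1 := pow_lt_one₀ (norm_nonneg w) hw two_ne_zero
  nlinarith [sq_norm_one_sub_conj_mul_sub_sq_norm_sub a w, mul_pos (sub_pos.2 ha2) (sub_pos.2 hw2)]

theorem differentiableOn_discMoebius {a : ℂ} (ha : ‖a‖ < 1) :
    DifferentiableOn ℂ (discMoebius a) (ball 0 1) :=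
  (differentiableOn_id.sub_const a).div ((differentiableOn_id.const_mul _).const_sub 1)
    fun _ hw => one_sub_conj_mul_ne_zero ha (mem_ball_zero_iff.1 hw).le

/-- The Schwarz–Pick lemma at the origin. -/
theorem norm_discMoebius_le_norm {f : ℂ → ℂ} (hf : DifferentiableOn ℂ f (ball 0 1))
    (hmaps : MapsTo f (ball 0 1) (ball 0 1)) {z : ℂ} (hz : z ∈ ball 0 1) :
    ‖discMoebius (f 0) (f z)‖ ≤ ‖z‖ := by
  have ha : ‖f 0‖ < 1 := mem_ball_zero_iff.1 (hmaps (mem_ball_self one_pos))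
  refine norm_le_norm_of_mapsTo_ball ((differentiableOn_discMoebius ha).comp hf hmaps)
    (fun w hw => ball_subset_closedBall ?_) (discMoebius_self _) (mem_ball_zero_iff.1 hz)
  exact mem_ball_zero_iff.2 (norm_discMoebius_lt_one ha (mem_ball_zero_iff.1 (hmaps hw)))

/-- Pseudo-hyperbolic discs are Euclidean discs. -/
theorem mem_ball_of_norm_sub_lt_mul_norm {a w : ℂ} {r : ℝ} (ha : ‖a‖ < 1) (hr : r ≤ 1)
    (h : ‖w - a‖ < r * ‖1 - conj a * w‖) :
    w ∈ ball (((1 - r ^ 2) / (1 - r ^ 2 * ‖a‖ ^ 2) : ℝ) • a)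
      (r * (1 - ‖a‖ ^ 2) / (1 - r ^ 2 * ‖a‖ ^ 2)) := by
  have hr0 : 0 < r := pos_of_mul_pos_left ((norm_nonneg _).trans_lt h) (norm_nonneg _)
  have ha2 : ‖a‖ ^ 2 < 1 := pow_lt_one₀ (norm_nonneg a) ha two_ne_zero
  set d := 1 - r ^ 2 * ‖a‖ ^ 2 with hd_def
  have hd : 0 < d := by nlinarith [pow_le_one₀ hr0.le hr (n := 2), sq_nonneg ‖a‖]
  have key : ‖d • w - (1 - r ^ 2) • a‖ ^ 2
      = d * (‖w - a‖ ^ 2 - r ^ 2 * ‖1 - conj a * w‖ ^ 2) + (r * (1 - ‖a‖ ^ 2)) ^ 2 := by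
    simp only [Complex.sq_norm, normSq_apply, sub_re, sub_im, mul_re, mul_im, conj_re, conj_im,
      one_re, one_im, real_smul, ofReal_re, ofReal_im, hd_def]
    ring
  have hsq : ‖w - a‖ ^ 2 < (r * ‖1 - conj a * w‖) ^ 2 :=
    pow_lt_pow_left₀ h (norm_nonneg _) two_ne_zero
  have hlt : ‖d • w - (1 - r ^ 2) • a‖ < r * (1 - ‖a‖ ^ 2) := by
    refine (pow_lt_pow_iff_left₀ (norm_nonneg _) (by nlinarith) two_ne_zero).1 ?_
    nlinarith
  have hcenter : w - ((1 - r ^ 2) / d) • a = d⁻¹ • (d • w - (1 - r ^ 2) • a) := by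
    rw [smul_sub, smul_smul, smul_smul, inv_mul_cancel₀ hd.ne', one_smul, div_eq_inv_mul]
  rw [mem_ball, dist_eq_norm, hcenter, norm_smul, Real.norm_of_nonneg (inv_nonneg.2 hd.le),
    ← div_eq_inv_mul]
  exact div_lt_div_of_pos_right hlt hd

theorem exists_image_ball_subset_ball {f : ℂ → ℂ} (hf : DifferentiableOn ℂ f (ball 0 1))
    (hmaps : MapsTo f (ball 0 1) (ball 0 1)) {r : ℝ} (hr : r < 1) :
    ∃ c, f '' ball 0 r ⊆ ball c r := by
  set a := f 0
  have ha : ‖a‖ < 1 := mem_ball_zero_iff.1 (hmaps (mem_ball_self one_pos))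
  refine ⟨((1 - r ^ 2) / (1 - r ^ 2 * ‖a‖ ^ 2) : ℝ) • a, ?_⟩
  rintro _ ⟨z, hz, rfl⟩
  have hz1 : z ∈ ball (0 : ℂ) 1 := ball_subset_ball hr.le hz
  have hr0 : 0 < r := (norm_nonneg z).trans_lt (mem_ball_zero_iff.1 hz)
  have hden : 0 < ‖1 - conj a * f z‖ :=
    norm_pos_iff.2 (one_sub_conj_mul_ne_zero ha (mem_ball_zero_iff.1 (hmaps hz1)).le)
  have hpick : ‖f z - a‖ < r * ‖1 - conj a * f z‖ := by
    have := (norm_discMoebius_le_norm hf hmaps hz1).trans_lt (mem_ball_zero_iff.1 hz)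
    rwa [discMoebius, norm_div, div_lt_iff₀ hden] at this
  have hradius : r * (1 - ‖a‖ ^ 2) / (1 - r ^ 2 * ‖a‖ ^ 2) ≤ r := by
    have ha2 : ‖a‖ ^ 2 < 1 := pow_lt_one₀ (norm_nonneg a) ha two_ne_zero
    have hr2 : r ^ 2 ≤ 1 := pow_le_one₀ hr0.le hr.le
    rw [div_le_iff₀ (by nlinarith)]
    nlinarith [mul_nonneg (mul_nonneg hr0.le (sq_nonneg ‖a‖)) (sub_nonneg.2 hr2)]
  exact ball_subset_ball hradius (mem_ball_of_norm_sub_lt_mul_norm ha hr.le hpick)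

end Complex

theorem area_contraction_holomorphic
    (f : ℂ → ℂ)
    (hf : DifferentiableOn ℂ f (ball (0 : ℂ) 1))
    (hmaps : Set.MapsTo f (ball (0 : ℂ) 1) (ball (0 : ℂ) 1)) :
    ∀ r : ℝ, 0 < r → r < 1 →
      volume (f '' ball (0 : ℂ) r) ≤ volume (ball (0 : ℂ) r) ∧
      volume (ball (0 : ℂ) r) = ENNReal.ofReal (Real.pi * r ^ 2) := by
  intro r hr0 hr1
  obtain ⟨c, hc⟩ := Complex.exists_image_ball_subset_ball hf hmaps hr1
  refine ⟨(measure_mono hc).trans_eq (Measure.addHaar_ball_center volume c r), ?_⟩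
  rw [Complex.volume_ball, ← ENNReal.ofReal_pow hr0.le, ← ENNReal.ofReal_coe_nnreal,
    ← ENNReal.ofReal_mul (by positivity), NNReal.coe_real_pi, mul_comm]
end

section
/- Let f : 𝔻 → ℂ be holomorphic and injective. Then for every r with 0 < r < 1, the area of f(𝔻_r) satisfies |f(𝔻_r)| ≤ r² |f(𝔻)|. -/
/-!
By the area formula, `|f(𝔻_t)| = ∫_{𝔻_t} ‖f'‖²`. On a disc `𝔻_t` with `t < 1` expand
`f' = ∑ aₙ zⁿ`; the monomials are orthogonal on centred discs, so
`∫_{𝔻_s} ‖f'‖² = ∑ π ‖aₙ‖² s^(2n+2) / (n+1)`, and since `s² r^(2n+2) ≤ r² s^(2n+2)` for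
`r ≤ s`, this gives `s² |f(𝔻_r)| ≤ r² |f(𝔻_s)| ≤ r² |f(𝔻)|`. Let `s → 1`.
-/

open MeasureTheory Metric Set Complex Real Filter
open scoped ENNReal NNReal Topology ComplexConjugate

theorem det_restrictScalars_smulRight_one (d : ℂ) :
    (((1 : ℂ →L[ℂ] ℂ).smulRight d).restrictScalars ℝ).det = ‖d‖ ^ 2 := by
  have h : (((1 : ℂ →L[ℂ] ℂ).smulRight d).restrictScalars ℝ : ℂ →ₗ[ℝ] ℂ) = Algebra.lmul ℝ ℂ d := by
    ext z
    simp [mul_comm]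
  rw [ContinuousLinearMap.det, h, ← Algebra.norm_apply, Algebra.norm_complex_apply,
    normSq_eq_norm_sq]

theorem volume_image_eq_lintegral_sq_norm_deriv {f : ℂ → ℂ} {s : Set ℂ} (hs : IsOpen s)
    (hf : DifferentiableOn ℂ f s) (hinj : InjOn f s) :
    volume (f '' s) = ∫⁻ z in s, ENNReal.ofReal (‖deriv f z‖ ^ 2) := by
  have hderiv : ∀ z ∈ s, HasFDerivWithinAt f
      (((1 : ℂ →L[ℂ] ℂ).smulRight (deriv f z)).restrictScalars ℝ) s z := fun z hz =>
    ((hf.differentiableAt (hs.mem_nhds hz)).hasDerivAt.hasFDerivAt.restrictScalars ℝ)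
      |>.hasFDerivWithinAt
  simp_rw [← lintegral_abs_det_fderiv_eq_addHaar_image volume hs.measurableSet hderiv hinj,
    det_restrictScalars_smulRight_one, abs_pow, abs_norm]

theorem integral_circleMap_zero_int_mul_eq_zero {k : ℤ} (hk : k ≠ 0) (R : ℝ) :
    ∫ θ in Ioo (-π) π, circleMap 0 R (k * θ) = 0 := by
  have hkI : (k : ℂ) * I ≠ 0 := mul_ne_zero (Int.cast_ne_zero.2 hk) I_ne_zero
  have hperiod : exp (k * I * π) = exp (k * I * (-π : ℝ)) :=
    exp_eq_exp_iff_exists_int.2 ⟨k, by push_cast; ring⟩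
  simp_rw [circleMap_zero, integral_const_mul]
  rw [← integral_Ioc_eq_integral_Ioo, ← intervalIntegral.integral_of_le (by linarith [pi_pos])]
  simp_rw [ofReal_mul, ofReal_intCast, show ∀ θ : ℝ, (k : ℂ) * θ * I = k * I * θ from
    fun θ => by ring, integral_exp_mul_complex hkI, hperiod, sub_self, zero_div, mul_zero]

theorem integral_ball_eq_integral_integral_circleMap {E : Type*} [NormedAddCommGroup E]
    [NormedSpace ℝ E] {f : ℂ → E} (hf : Continuous f) (t : ℝ) :
    ∫ z in ball (0 : ℂ) t, f z =
      ∫ ρ in Ioo 0 t, ∫ θ in Ioo (-π) π, ρ • f (circleMap 0 ρ θ) := by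
  have hpolar : ∀ p : ℝ × ℝ, Complex.polarCoord.symm p = circleMap 0 p.1 p.2 := fun p => by
    rw [Complex.polarCoord_symm_apply, circleMap_zero, exp_mul_I]
    push_cast
    ring
  have hcirc : Continuous fun p : ℝ × ℝ => circleMap 0 p.1 p.2 := by
    simp_rw [circleMap_zero]
    fun_prop
  have htarget : polarCoord.target ∩ (fun p : ℝ × ℝ => circleMap 0 p.1 p.2) ⁻¹' ball 0 t =
      Ioo 0 t ×ˢ Ioo (-π) π := by
    ext ⟨ρ, θ⟩
    simp only [polarCoord_target, mem_inter_iff, mem_prod, mem_Ioi, mem_preimage,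
      mem_ball_zero_iff, norm_circleMap_zero, mem_Ioo]
    constructor
    · rintro ⟨⟨hρ, hθ⟩, hρt⟩
      exact ⟨⟨hρ, abs_of_pos hρ ▸ hρt⟩, hθ⟩
    · rintro ⟨⟨hρ, hρt⟩, hθ⟩
      exact ⟨⟨hρ, hθ⟩, (abs_of_pos hρ).symm ▸ hρt⟩
  have hint : IntegrableOn (fun p : ℝ × ℝ => p.1 • f (circleMap 0 p.1 p.2))
      (Ioo 0 t ×ˢ Ioo (-π) π) :=
    ((continuous_fst.smul (hf.comp hcirc)).continuousOn.integrableOn_compact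
      (isCompact_Icc.prod isCompact_Icc)).mono_set
      (prod_mono Ioo_subset_Icc_self Ioo_subset_Icc_self)
  rw [← integral_indicator measurableSet_ball, ← Complex.integral_comp_polarCoord_symm]
  have hind : ∀ p : ℝ × ℝ, p.1 • (ball 0 t).indicator f (circleMap 0 p.1 p.2) =
      ((fun p : ℝ × ℝ => circleMap 0 p.1 p.2) ⁻¹' ball 0 t).indicator
        (fun p => p.1 • f (circleMap 0 p.1 p.2)) p := fun p => by
    by_cases h : circleMap 0 p.1 p.2 ∈ ball 0 t <;> simp [h]
  simp_rw [hpolar, hind]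
  rw [setIntegral_indicator (measurableSet_ball.preimage hcirc.measurable), htarget]
  exact setIntegral_prod _ hint

theorem integral_ball_pow_mul_conj_pow {t : ℝ} (ht : 0 ≤ t) (n m : ℕ) :
    ∫ z in ball (0 : ℂ) t, z ^ n * conj z ^ m =
      if n = m then ((π / (n + 1) * t ^ (2 * n + 2) : ℝ) : ℂ) else 0 := by
  have hmono : ∀ ρ θ : ℝ, ρ • (circleMap 0 ρ θ ^ n * conj (circleMap 0 ρ θ) ^ m) =
      ρ * circleMap 0 (ρ ^ (n + m)) (((n - m : ℤ) : ℝ) * θ) := fun ρ θ => by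
    rw [conj_circleMap_zero, circleMap_zero_pow, circleMap_zero_pow, circleMap_zero_mul,
      real_smul, pow_add]
    push_cast
    ring_nf
  rw [integral_ball_eq_integral_integral_circleMap (by fun_prop)]
  simp_rw [hmono, integral_const_mul]
  split_ifs with h
  · subst h
    simp_rw [sub_self, Int.cast_zero, zero_mul, circleMap_zero, ofReal_zero, zero_mul,
      Complex.exp_zero, mul_one, setIntegral_const]
    have hρ : ∀ ρ : ℝ, (ρ : ℂ) * volume.real (Ioo (-π) π) • ((ρ ^ (n + n) : ℝ) : ℂ) =
        ((2 * π * ρ ^ (2 * n + 1) : ℝ) : ℂ) := fun ρ => by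
      rw [volume_real_Ioo_of_le (by linarith [pi_pos]), real_smul]
      push_cast
      ring
    simp_rw [hρ]
    rw [integral_complex_ofReal, integral_const_mul, ← integral_Ioc_eq_integral_Ioo,
      ← intervalIntegral.integral_of_le ht, integral_pow]
    congr 1
    rw [zero_pow (by omega), sub_zero, show 2 * n + 1 + 1 = 2 * n + 2 by ring]
    field_simp
    push_cast
    ring
  · simp_rw [integral_circleMap_zero_int_mul_eq_zero (sub_ne_zero.2 (Int.ofNat_inj.not.2 h)),
      mul_zero, integral_zero]

theorem integral_ball_sq_norm_sum_mul_pow {t : ℝ} (ht : 0 ≤ t) (c : ℕ → ℂ) (N : ℕ) :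
    ∫ z in ball (0 : ℂ) t, ‖∑ k ∈ Finset.range N, c k * z ^ k‖ ^ 2 =
      ∑ k ∈ Finset.range N, ‖c k‖ ^ 2 * π / (k + 1) * t ^ (2 * k + 2) := by
  have hexpand : ∀ z : ℂ, ((‖∑ k ∈ Finset.range N, c k * z ^ k‖ ^ 2 : ℝ) : ℂ) =
      ∑ n ∈ Finset.range N, ∑ m ∈ Finset.range N,
        c n * conj (c m) * (z ^ n * conj z ^ m) := fun z => by
    rw [Complex.sq_norm, ← mul_conj, map_sum, Finset.sum_mul_sum]
    simp only [map_mul, map_pow, mul_mul_mul_comm]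
  have hint : ∀ n m : ℕ, IntegrableOn (fun z : ℂ => c n * conj (c m) * (z ^ n * conj z ^ m))
      (ball 0 t) := fun n m =>
    ((by fun_prop : Continuous fun z : ℂ => c n * conj (c m) * (z ^ n * conj z ^ m))
      |>.continuousOn.integrableOn_compact (isCompact_closedBall 0 t)).mono_set
      ball_subset_closedBall
  apply ofReal_injective
  rw [← integral_complex_ofReal]
  simp_rw [hexpand]
  rw [integral_finsetSum _ fun n _ => integrable_finsetSum _ fun m _ => hint n m]
  simp_rw [integral_finsetSum _ fun m _ => hint _ m, integral_const_mul,
    integral_ball_pow_mul_conj_pow ht, mul_ite, mul_zero, Finset.sum_ite_eq,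
    Finset.mem_range]
  push_cast
  refine Finset.sum_congr rfl fun k hk => ?_
  rw [if_pos (Finset.mem_range.1 hk), mul_conj, normSq_eq_norm_sq]
  push_cast
  ring

theorem HasFPowerSeriesOnBall.hasSum_integral_ball_sq_norm {g : ℂ → ℂ}
    {p : FormalMultilinearSeries ℂ ℂ ℂ} {R : ℝ≥0∞} (hg : HasFPowerSeriesOnBall g p 0 R) {s : ℝ}
    (hs : 0 ≤ s) (hsR : ENNReal.ofReal s < R) :
    HasSum (fun n : ℕ => ‖p.coeff n‖ ^ 2 * π / (n + 1) * s ^ (2 * n + 2))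
      (∫ z in ball (0 : ℂ) s, ‖g z‖ ^ 2) := by
  have hpartial : ∀ N z, p.partialSum N z = ∑ k ∈ Finset.range N, p.coeff k * z ^ k :=
    fun N z => by simp [FormalMultilinearSeries.partialSum, mul_comm]
  have hunif : TendstoUniformlyOn (fun N (z : ℂ) => ‖p.partialSum N z‖)
      (fun z => ‖g z‖) atTop (ball 0 s) := by
    refine uniformContinuous_norm.comp_tendstoUniformlyOn ?_
    simpa [Real.coe_toNNReal _ hs] using hg.tendstoUniformlyOn (r' := s.toNNReal) hsR
  have hclosed : closedBall (0 : ℂ) s ⊆ eball 0 R := fun z hz => by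
    rw [mem_eball, edist_zero_right, ← ofReal_norm]
    exact (ENNReal.ofReal_le_ofReal (mem_closedBall_zero_iff.1 hz)).trans_lt hsR
  obtain ⟨C, hC⟩ := (isCompact_closedBall (0 : ℂ) s).exists_bound_of_continuousOn
    (hg.continuousOn.mono hclosed)
  have hbound :=
    hunif.eventually_forall_le (lt_add_one C) fun z hz => hC z (ball_subset_closedBall hz)
  have : IsFiniteMeasure (volume.restrict (ball (0 : ℂ) s)) :=
    isFiniteMeasure_restrict.2 measure_ball_lt_top.ne
  rw [hasSum_iff_tendsto_nat_of_nonneg (fun n => by positivity)]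
  simp_rw [← integral_ball_sq_norm_sum_mul_pow hs, ← hpartial]
  refine tendsto_integral_filter_of_norm_le_const
    (.of_forall fun N => ((p.partialSum_continuous N).norm.pow 2).aestronglyMeasurable)
    ⟨(C + 1) ^ 2, hbound.mono fun N hN => (ae_restrict_iff' measurableSet_ball).2 <|
      .of_forall fun z hz => ?_⟩
    ((ae_restrict_iff' measurableSet_ball).2 <| .of_forall fun z hz =>
      (hunif.tendsto_at hz).pow 2)
  rw [norm_pow, norm_norm]
  exact pow_le_pow_left₀ (norm_nonneg _) (hN z hz) 2

theorem sq_mul_integral_ball_sq_norm_le {g : ℂ → ℂ} {r s R : ℝ}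
    (hg : DifferentiableOn ℂ g (ball 0 R)) (hr : 0 ≤ r) (hrs : r ≤ s) (hsR : s < R) :
    s ^ 2 * ∫ z in ball (0 : ℂ) r, ‖g z‖ ^ 2 ≤ r ^ 2 * ∫ z in ball (0 : ℂ) s, ‖g z‖ ^ 2 := by
  obtain ⟨t, hst, htR⟩ := exists_between hsR
  lift t to ℝ≥0 using (hr.trans hrs).trans hst.le
  have ht : 0 < t := NNReal.coe_pos.1 (by linarith)
  have hp := (hg.mono (closedBall_subset_ball htR)).hasFPowerSeriesOnBall ht
  have hlt : ∀ u : ℝ, u < t → ENNReal.ofReal u < t := fun u hu => by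
    rw [← ENNReal.ofReal_coe_nnreal]
    exact (ENNReal.ofReal_lt_ofReal_iff (NNReal.coe_pos.2 ht)).2 hu
  refine hasSum_le (fun n => ?_)
    ((hp.hasSum_integral_ball_sq_norm hr (hlt r (by linarith))).mul_left (s ^ 2))
    ((hp.hasSum_integral_ball_sq_norm (hr.trans hrs) (hlt s hst)).mul_left (r ^ 2))
  set c := ‖(cauchyPowerSeries g 0 t).coeff n‖ ^ 2 * π / (n + 1)
  calc s ^ 2 * (c * r ^ (2 * n + 2)) = r ^ 2 * (c * (s ^ 2 * r ^ (2 * n))) := by ring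
    _ ≤ r ^ 2 * (c * (s ^ 2 * s ^ (2 * n))) := by gcongr
    _ = r ^ 2 * (c * s ^ (2 * n + 2)) := by ring

theorem ofReal_sq_mul_lintegral_ball_le {g : ℂ → ℂ} {r s R : ℝ}
    (hg : DifferentiableOn ℂ g (ball 0 R)) (hr : 0 ≤ r) (hrs : r ≤ s) (hsR : s < R) :
    ENNReal.ofReal (s ^ 2) * ∫⁻ z in ball (0 : ℂ) r, ENNReal.ofReal (‖g z‖ ^ 2) ≤
      ENNReal.ofReal (r ^ 2) * ∫⁻ z in ball (0 : ℂ) s, ENNReal.ofReal (‖g z‖ ^ 2) := by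
  have hint : ∀ u < R, IntegrableOn (fun z => ‖g z‖ ^ 2) (ball 0 u) := fun u hu =>
    (((hg.continuousOn.mono (closedBall_subset_ball hu)).norm.pow 2).integrableOn_compact
      (isCompact_closedBall 0 u)).mono_set ball_subset_closedBall
  have hnonneg : ∀ u : ℝ, 0 ≤ᵐ[volume.restrict (ball (0 : ℂ) u)] fun z => ‖g z‖ ^ 2 :=
    fun u => .of_forall fun z => sq_nonneg _
  rw [← ofReal_integral_eq_lintegral_ofReal (hint r (by linarith)) (hnonneg r),
    ← ofReal_integral_eq_lintegral_ofReal (hint s hsR) (hnonneg s),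
    ← ENNReal.ofReal_mul (sq_nonneg _), ← ENNReal.ofReal_mul (sq_nonneg _)]
  exact ENNReal.ofReal_le_ofReal (sq_mul_integral_ball_sq_norm_le hg hr hrs hsR)

theorem ENNReal.le_of_forall_ofReal_sq_mul_le {a b : ℝ≥0∞} {r : ℝ} (hr : r < 1)
    (h : ∀ s ∈ Ioo r 1, ENNReal.ofReal (s ^ 2) * a ≤ b) : a ≤ b := by
  have hsq : Tendsto (fun s : ℝ => ENNReal.ofReal (s ^ 2)) (𝓝[<] 1) (𝓝 1) := by
    have hcont : Continuous fun s : ℝ => ENNReal.ofReal (s ^ 2) :=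
      ENNReal.continuous_ofReal.comp (continuous_pow 2)
    simpa using (hcont.tendsto 1).mono_left nhdsWithin_le_nhds
  refine le_of_tendsto (by simpa using ENNReal.Tendsto.mul_const hsq (.inl one_ne_zero)) ?_
  filter_upwards [Ioo_mem_nhdsLT hr] using h

theorem area_convexity_holomorphic_injective
    (f : ℂ → ℂ)
    (hf : DifferentiableOn ℂ f (ball (0 : ℂ) 1))
    (hinj : Set.InjOn f (ball (0 : ℂ) 1)) :
    ∀ r : ℝ, 0 < r → r < 1 →
      volume (f '' ball (0 : ℂ) r)
        ≤ ENNReal.ofReal (r ^ 2) * volume (f '' ball (0 : ℂ) 1) := by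
  intro r hr0 hr1
  have hf' : DifferentiableOn ℂ (deriv f) (ball 0 1) :=
    (hf.analyticOnNhd isOpen_ball).deriv.differentiableOn
  have harea : ∀ t ≤ 1,
      volume (f '' ball 0 t) = ∫⁻ z in ball 0 t, ENNReal.ofReal (‖deriv f z‖ ^ 2) :=
    fun t ht => volume_image_eq_lintegral_sq_norm_deriv isOpen_ball
      (hf.mono (ball_subset_ball ht)) (hinj.mono (ball_subset_ball ht))
  refine ENNReal.le_of_forall_ofReal_sq_mul_le hr1 fun s ⟨hrs, hs1⟩ => ?_
  calc ENNReal.ofReal (s ^ 2) * volume (f '' ball 0 r)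
      ≤ ENNReal.ofReal (r ^ 2) * volume (f '' ball 0 s) := by
        rw [harea r hr1.le, harea s hs1.le]
        exact ofReal_sq_mul_lintegral_ball_le hf' hr0.le hrs.le hs1
    _ ≤ ENNReal.ofReal (r ^ 2) * volume (f '' ball 0 1) := by
        gcongr
end

section
/- Let c ∈ ℂ with 0 < |c| < 1/2 and define f(z) = z + c·z̄² on the open unit disk 𝔻. Then for every r with 0 < r < 1, the strict inequality |f(𝔻_r)| > r² |f(𝔻)| holds; in particular the area estimate |f(𝔻_r)| ≤ r²|f(𝔻)| valid for injective holomorphic maps fails for injective harmonic maps. -/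
open MeasureTheory Metric Set

/-!
The differential of `f z = z + c z̄²` is `w ↦ w + 2 c z̄ w̄`, with Jacobian
`1 - 4 ‖c‖² ‖z‖²`, nonnegative on the unit disk since `‖c‖ < 1/2`; the same bound makes `f`
injective there, as `f z = f w` forces `z - w = c (w̄ - z̄)(w̄ + z̄)`. The change of variables
formula and a radial integration then give `|f(𝔻_r)| = π r² - 2π ‖c‖² r⁴`, and
`r² |f(𝔻)| = π r² - 2π ‖c‖² r²` is strictly smaller because `r⁴ < r²`.
-/

section RadialIntegral

variable {E : Type*} [NormedAddCommGroup E] [NormedSpace ℝ E] [FiniteDimensional ℝ E]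
  [Nontrivial E] [MeasurableSpace E] [BorelSpace E] (μ : Measure E) [μ.IsAddHaarMeasure]

theorem setIntegral_ball_norm_pow (n : ℕ) {s : ℝ} (hs : 0 ≤ s) :
    ∫ x in ball (0 : E) s, ‖x‖ ^ n ∂μ =
      Module.finrank ℝ E / (n + Module.finrank ℝ E) * μ.real (ball 0 1) *
        s ^ (n + Module.finrank ℝ E) := by
  obtain ⟨k, hk⟩ := Nat.exists_eq_succ_of_ne_zero (Module.finrank_pos (R := ℝ) (M := E)).ne'
  have hradial : ∫ y in Ioi (0 : ℝ), y ^ k • (Iio s).indicator (· ^ n) y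
      = ∫ y in (0 : ℝ)..s, y ^ (n + k) := by
    rw [intervalIntegral.integral_of_le hs, integral_Ioc_eq_integral_Ioo, ← Ioi_inter_Iio,
      ← setIntegral_indicator measurableSet_Iio]
    refine setIntegral_congr_fun measurableSet_Ioi fun y _ => ?_
    by_cases hy : y < s <;> simp [hy, pow_add, mul_comm]
  rw [← integral_indicator measurableSet_ball]
  calc ∫ x, (ball (0 : E) s).indicator (‖·‖ ^ n) x ∂μ
      = ∫ x, (Iio s).indicator (· ^ n) ‖x‖ ∂μ := by
        congr 1; ext x; simp [indicator]
    _ = _ := by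
        rw [integral_fun_norm_addHaar, hk, Nat.succ_sub_one, hradial, integral_pow]
        simp only [Nat.succ_eq_add_one, nsmul_eq_mul, smul_eq_mul,
          zero_pow (n + k).succ_ne_zero, sub_zero]
        push_cast
        field_simp
        ring

end RadialIntegral

theorem Continuous.integrableOn_ball {X F : Type*} [MetricSpace X] [ProperSpace X]
    [MeasurableSpace X] [OpensMeasurableSpace X] [NormedAddCommGroup F] {μ : Measure X}
    [IsFiniteMeasureOnCompacts μ] {f : X → F} (hf : Continuous f) (x : X) (r : ℝ) :
    IntegrableOn f (ball x r) μ :=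
  (hf.continuousOn.integrableOn_compact (isCompact_closedBall x r)).mono_set
    ball_subset_closedBall

open Complex (conjCLE)
open scoped Real

theorem Complex.volume_real_ball (a : ℂ) {r : ℝ} (hr : 0 ≤ r) :
    volume.real (ball a r) = π * r ^ 2 := by
  simp [measureReal_def, Complex.volume_ball, ENNReal.toReal_ofReal hr, mul_comm]

noncomputable def idAddMulConj (b : ℂ) : ℂ →L[ℝ] ℂ :=
  ContinuousLinearMap.id ℝ ℂ + b • conjCLE.toContinuousLinearMap

theorem det_idAddMulConj (b : ℂ) : (idAddMulConj b).det = 1 - ‖b‖ ^ 2 := by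
  have hmat : LinearMap.toMatrix Complex.basisOneI Complex.basisOneI (idAddMulConj b) =
      !![1 + b.re, b.im; b.im, 1 - b.re] := by
    ext i j
    fin_cases i <;> fin_cases j <;>
      simp [LinearMap.toMatrix_apply, idAddMulConj, Complex.coe_basisOneI_repr, sub_eq_add_neg]
  rw [ContinuousLinearMap.det, ← LinearMap.det_toMatrix Complex.basisOneI, hmat,
    Matrix.det_fin_two_of, Complex.sq_norm, Complex.normSq_apply]
  ring

def harmonicExample (c z : ℂ) : ℂ := z + c * starRingEnd ℂ z ^ 2

theorem hasFDerivAt_harmonicExample (c z : ℂ) :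
    HasFDerivAt (harmonicExample c) (idAddMulConj (2 * c * starRingEnd ℂ z)) z := by
  have hconj : HasFDerivAt (starRingEnd ℂ) conjCLE.toContinuousLinearMap z :=
    conjCLE.toContinuousLinearMap.hasFDerivAt
  have hfun : harmonicExample c = fun w => w + c * (starRingEnd ℂ w * starRingEnd ℂ w) := by
    funext w
    rw [harmonicExample, sq]
  rw [hfun]
  refine ((hasFDerivAt_id (𝕜 := ℝ) z).add ((hconj.mul hconj).const_mul c)).congr_fderiv ?_
  ext w
  simp [idAddMulConj, smul_smul, two_mul, add_mul, mul_assoc]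

theorem injOn_harmonicExample {c : ℂ} {R : ℝ} (hcR : 2 * ‖c‖ * R ≤ 1) :
    InjOn (harmonicExample c) (ball 0 R) := by
  intro z hz w hw hzw
  rw [mem_ball_zero_iff] at hz hw
  by_contra hne
  have hdiff : z - w = c * (starRingEnd ℂ (w - z) * (starRingEnd ℂ w + starRingEnd ℂ z)) := by
    unfold harmonicExample at hzw
    rw [map_sub]
    linear_combination hzw
  have hsum : ‖starRingEnd ℂ w + starRingEnd ℂ z‖ < 2 * R := by
    calc ‖starRingEnd ℂ w + starRingEnd ℂ z‖ ≤ ‖w‖ + ‖z‖ := by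
          simpa only [RCLike.norm_conj] using norm_add_le (starRingEnd ℂ w) (starRingEnd ℂ z)
      _ < 2 * R := by linarith
  have hpos : 0 < ‖z - w‖ := norm_pos_iff.2 (sub_ne_zero_of_ne hne)
  refine lt_irrefl ‖z - w‖ ?_
  calc ‖z - w‖
      = ‖z - w‖ * (‖c‖ * ‖starRingEnd ℂ w + starRingEnd ℂ z‖) := by
        nth_rewrite 1 [hdiff]
        rw [norm_mul, norm_mul, RCLike.norm_conj, norm_sub_rev w z]
        ring
    _ < ‖z - w‖ * 1 := by
        gcongr
        rcases (norm_nonneg c).eq_or_lt with hc | hc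
        · simp [← hc]
        · nlinarith
    _ = ‖z - w‖ := mul_one _

theorem Complex.setIntegral_ball_one_sub_mul_norm_sq (a : ℝ) {s : ℝ} (hs : 0 ≤ s) :
    ∫ z in ball (0 : ℂ) s, (1 - a * ‖z‖ ^ 2) = π * s ^ 2 - a * π * s ^ 4 / 2 := by
  have hint : IntegrableOn (fun z : ℂ => a * ‖z‖ ^ 2) (ball 0 s) :=
    (by fun_prop : Continuous _).integrableOn_ball 0 s
  have hone : IntegrableOn (fun _ : ℂ => (1 : ℝ)) (ball 0 s) := integrableOn_const
  rw [integral_sub hone hint, setIntegral_const,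
    integral_const_mul, setIntegral_ball_norm_pow volume 2 hs, Complex.finrank_real_complex,
    Complex.volume_real_ball 0 hs, Complex.volume_real_ball 0 zero_le_one, smul_eq_mul]
  ring

theorem volume_image_ball_harmonicExample {c : ℂ} {s : ℝ} (hs : 0 ≤ s) (hcs : 2 * ‖c‖ * s ≤ 1) :
    volume (harmonicExample c '' ball 0 s) =
      ENNReal.ofReal (π * s ^ 2 - 2 * π * ‖c‖ ^ 2 * s ^ 4) := by
  have hjac : ∀ z ∈ ball (0 : ℂ) s,
      0 ≤ 1 - 4 * ‖c‖ ^ 2 * ‖z‖ ^ 2 ∧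
      (idAddMulConj (2 * c * starRingEnd ℂ z)).det = 1 - 4 * ‖c‖ ^ 2 * ‖z‖ ^ 2 := by
    intro z hz
    rw [mem_ball_zero_iff] at hz
    refine ⟨?_, ?_⟩
    · have : (2 * ‖c‖ * ‖z‖) ^ 2 ≤ 1 :=
        pow_le_one₀ (by positivity) (le_trans (by gcongr) hcs)
      linarith
    · rw [det_idAddMulConj, norm_mul, norm_mul, RCLike.norm_conj, Complex.norm_two]
      ring
  rw [← lintegral_abs_det_fderiv_eq_addHaar_image volume measurableSet_ball
      (fun z _ => (hasFDerivAt_harmonicExample c z).hasFDerivWithinAt)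
      (injOn_harmonicExample hcs),
    setLIntegral_congr_fun measurableSet_ball fun z hz => by
      rw [(hjac z hz).2, abs_of_nonneg (hjac z hz).1],
    ← ofReal_integral_eq_lintegral_ofReal
      ((by fun_prop : Continuous _).integrableOn_ball 0 s)
      ((ae_restrict_iff' measurableSet_ball).2 (.of_forall fun z hz => (hjac z hz).1)),
    Complex.setIntegral_ball_one_sub_mul_norm_sq _ hs]
  ring_nf

theorem harmonic_example_fails_convexity
    (c : ℂ) (hc0 : 0 < ‖c‖) (hc : ‖c‖ < 1 / 2)
    (f : ℂ → ℂ) (hf : ∀ z : ℂ, f z = z + c * (starRingEnd ℂ z) ^ 2) :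
    ∀ r : ℝ, 0 < r → r < 1 →
      ENNReal.ofReal (r ^ 2) * volume (f '' ball (0 : ℂ) 1)
        < volume (f '' ball (0 : ℂ) r) := by
  intro r hr hr1
  obtain rfl : f = harmonicExample c := funext hf
  rw [volume_image_ball_harmonicExample zero_le_one (by linarith),
    volume_image_ball_harmonicExample hr.le (by nlinarith), ← ENNReal.ofReal_mul (sq_nonneg r)]
  simp only [one_pow, mul_one]
  have hc2 : ‖c‖ ^ 2 < 1 / 4 := by nlinarith
  have hfull : 0 ≤ π - 2 * π * ‖c‖ ^ 2 := by nlinarith [mul_pos Real.pi_pos (sub_pos.2 hc2)]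
  have hr4 : r ^ 4 < r ^ 2 := by
    have : r ^ 2 < 1 := by nlinarith
    nlinarith [mul_pos (pow_pos hr 2) (sub_pos.2 this)]
  refine (ENNReal.ofReal_lt_ofReal_iff_of_nonneg (mul_nonneg (sq_nonneg r) hfull)).2 ?_
  nlinarith [Real.pi_pos, mul_pos (mul_pos Real.pi_pos (pow_pos hc0 2)) (sub_pos.2 hr4)]
end

section
/- Let ξ : ℝ → ℝ be a function satisfying ξ(t + 2π) = ξ(t) + 2π for all t ∈ ℝ, and for α, t ∈ ℝ set γ(α, t) = ξ(α + t) − ξ(t). Then for every r ∈ (0,1), ∫₀^{2π} ∫₀^{2π} 𝒦_r(α) · (γ(α,t) − α) · cos α dα dt = 0, where 𝒦_r(u) = 2r²(1 − r⁴) sin u / (1 − 2r² cos u + r⁴)². -/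
/-!
Write `ζ(s) = ξ(s) - s` (which is `2π`-periodic) and `g(α) = 𝒦_r(α) cos α`, a continuous,
`2π`-periodic, odd function, so `∫₀^{2π} g = 0`. Then the inner integral is
`∫₀^{2π} g(α) (ζ(α + t) - ζ(t)) dα = ∫₀^{2π} g(s - t) ζ(s) ds`, and after exchanging the order
of integration the `t`-integral `∫₀^{2π} g(s - t) dt` vanishes for every `s`.

Fubini applies only when `ζ` is integrable on a period. If it is not, then
`s ↦ g(s - t) ζ(s)` is integrable only for `t` in a countable set: for two translates of `g`
without a common zero, `ζ` is a combination of `g(s - t₁) ζ(s)` and `g(s - t₂) ζ(s)` with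
continuous coefficients, and the zeros of `g` lie in `(π/2) ℤ`. So the inner integral vanishes
for almost every `t`.
-/

/-- The kernel `𝒦_r`. -/
noncomputable def kerK (r u : ℝ) : ℝ :=
  2 * r ^ 2 * (1 - r ^ 4) * Real.sin u / (1 - 2 * r ^ 2 * Real.cos u + r ^ 4) ^ 2

open Real MeasureTheory Set Function Interval

namespace Function.Periodic

variable {E : Type*} [NormedAddCommGroup E] [NormedSpace ℝ E] {f : ℝ → E} {p : ℝ}

theorem intervalIntegral_comp_sub_left (hf : Periodic f p) (s : ℝ) :
    ∫ t in (0 : ℝ)..p, f (s - t) = ∫ t in (0 : ℝ)..p, f t := by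
  simpa using hf.intervalIntegral_add_eq (s - p) 0

theorem intervalIntegral_eq_zero_of_odd (hf : Periodic f p) (hodd : ∀ x, f (-x) = -f x) :
    ∫ x in (0 : ℝ)..p, f x = 0 := by
  have h := hf.intervalIntegral_comp_sub_left p
  simp only [sub_eq_neg_add, hf (-_), hodd, intervalIntegral.integral_neg] at h
  have h2 : (2 : ℝ) • ∫ x in (0 : ℝ)..p, f x = 0 := by
    rw [two_smul]; nth_rewrite 1 [← h]; exact neg_add_cancel _
  exact (smul_eq_zero.mp h2).resolve_left two_ne_zero

end Function.Periodic

theorem IntervalIntegrable.of_mul_of_mul {f g₁ g₂ : ℝ → ℝ} {μ : Measure ℝ} {a b : ℝ}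
    (hg₁ : Continuous g₁) (hg₂ : Continuous g₂) (hne : ∀ x, g₁ x ≠ 0 ∨ g₂ x ≠ 0)
    (hf₁ : IntervalIntegrable (fun x => g₁ x * f x) μ a b)
    (hf₂ : IntervalIntegrable (fun x => g₂ x * f x) μ a b) :
    IntervalIntegrable f μ a b := by
  have hW : ∀ x, g₁ x ^ 2 + g₂ x ^ 2 ≠ 0 := fun x => by
    rcases hne x with h | h <;> positivity
  have hcont : ∀ g : ℝ → ℝ, Continuous g → Continuous fun x => g x / (g₁ x ^ 2 + g₂ x ^ 2) :=
    fun g hg => hg.div (by fun_prop) hW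
  have hf : f = fun x => g₁ x / (g₁ x ^ 2 + g₂ x ^ 2) * (g₁ x * f x)
      + g₂ x / (g₁ x ^ 2 + g₂ x ^ 2) * (g₂ x * f x) := by
    funext x
    field_simp [hW x]
  rw [hf]
  exact (hf₁.continuousOn_mul (hcont g₁ hg₁).continuousOn).add
    (hf₂.continuousOn_mul (hcont g₂ hg₂).continuousOn)

theorem countable_setOf_intervalIntegrable_mul_comp_sub {g f : ℝ → ℝ} {μ : Measure ℝ} {a b : ℝ}
    (hg : Continuous g) (hZ : {x | g x = 0}.Countable) (hf : ¬IntervalIntegrable f μ a b) :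
    {t | IntervalIntegrable (fun s => g (s - t) * f s) μ a b}.Countable := by
  rcases eq_empty_or_nonempty {t | IntervalIntegrable (fun s => g (s - t) * f s) μ a b}
    with hT | ⟨t₀, ht₀⟩
  · simp [hT]
  refine (hZ.image2 hZ fun z₀ z => t₀ + z₀ - z).mono fun t ht => ?_
  by_contra hmem
  refine hf (ht₀.of_mul_of_mul (hg.comp (continuous_sub_right t₀))
    (hg.comp (continuous_sub_right t)) (fun x => not_and_or.mp fun hx => hmem ?_) ht)
  exact ⟨x - t₀, hx.1, x - t, hx.2, by ring⟩

section Convolution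

variable {g f : ℝ → ℝ} {p : ℝ}

/-- When `x ↦ g x * f (x + t)` is not integrable, both sides are the junk value `0`. -/
theorem intervalIntegral_mul_increment_eq (hgp : Periodic g p) (hfp : Periodic f p)
    (hg : IntervalIntegrable g volume 0 p) (hg0 : ∫ x in (0 : ℝ)..p, g x = 0) (t : ℝ) :
    ∫ x in (0 : ℝ)..p, g x * (f (x + t) - f t) = ∫ s in (0 : ℝ)..p, g (s - t) * f s := by
  have hconst : IntervalIntegrable (fun x => g x * f t) volume 0 p := hg.mul_const _
  have hdrop : ∫ x in (0 : ℝ)..p, g x * (f (x + t) - f t)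
      = ∫ x in (0 : ℝ)..p, g x * f (x + t) := by
    simp only [mul_sub]
    by_cases hint : IntervalIntegrable (fun x => g x * f (x + t)) volume 0 p
    · rw [intervalIntegral.integral_sub hint hconst, intervalIntegral.integral_mul_const, hg0,
        zero_mul, sub_zero]
    · rw [intervalIntegral.integral_undef hint,
        intervalIntegral.integral_undef fun h => hint (by simpa using h.add hconst)]
  have hshift : Periodic (fun s => g (s - t) * f s) p := fun s => by
    simp only [← sub_add_eq_add_sub, hgp (s - t), hfp s]
  have hsub := intervalIntegral.integral_comp_add_right (fun s => g (s - t) * f s) t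
    (a := 0) (b := p)
  simp only [add_sub_cancel_right, zero_add] at hsub
  rw [hdrop, hsub, add_comm, hshift.intervalIntegral_add_eq t 0, zero_add]

variable {a b : ℝ}

theorem integral_integral_mul_comp_sub_eq_zero_of_intervalIntegrable (hp : 0 < p)
    (hg : Continuous g) (hgp : Periodic g p) (hg0 : ∫ x in (0 : ℝ)..p, g x = 0)
    (hf : IntervalIntegrable f volume a b) :
    ∫ t in (0 : ℝ)..p, ∫ s in a..b, g (s - t) * f s = 0 := by
  obtain ⟨C, hC⟩ := (hgp.isBounded_of_continuous hp.ne' hg).exists_norm_le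
  have hint : Integrable (uncurry fun t s => g (s - t) * f s)
      ((volume.restrict (Ioc 0 p)).prod (volume.restrict (Ι a b))) :=
    (hf.def'.comp_snd _).bdd_mul (c := C)
      (hg.comp (continuous_snd.sub continuous_fst)).aestronglyMeasurable
      (ae_of_all _ fun q => hC _ (mem_range_self _))
  have hinner : ∀ s, ∫ t in Ioc 0 p, g (s - t) * f s = 0 := fun s => by
    rw [integral_mul_const, ← intervalIntegral.integral_of_le hp.le,
      hgp.intervalIntegral_comp_sub_left, hg0, zero_mul]
  simp only [intervalIntegral.intervalIntegral_eq_integral_uIoc, if_pos hp.le, uIoc_of_le hp.le,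
    one_smul, integral_smul]
  rw [integral_integral_swap hint]
  simp only [hinner, integral_zero, smul_zero]

theorem integral_integral_mul_comp_sub_eq_zero (hp : 0 < p) (hg : Continuous g)
    (hgp : Periodic g p) (hg0 : ∫ x in (0 : ℝ)..p, g x = 0) (hZ : {x | g x = 0}.Countable) :
    ∫ t in (0 : ℝ)..p, ∫ s in a..b, g (s - t) * f s = 0 := by
  by_cases hf : IntervalIntegrable f volume a b
  · exact integral_integral_mul_comp_sub_eq_zero_of_intervalIntegrable hp hg hgp hg0 hf
  have hnull := measure_eq_zero_iff_ae_notMem.mp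
    ((countable_setOf_intervalIntegrable_mul_comp_sub hg hZ hf).measure_zero volume)
  exact intervalIntegral.integral_zero_ae
    (hnull.mono fun t ht _ => intervalIntegral.integral_undef ht)

end Convolution

section Kernel

variable {r : ℝ}

theorem kerK_denom_pos (hr0 : 0 < r) (hr1 : r < 1) (u : ℝ) :
    0 < 1 - 2 * r ^ 2 * cos u + r ^ 4 := by
  have h2 : r ^ 2 < 1 := by nlinarith
  nlinarith [cos_le_one u, sq_nonneg (1 - r ^ 2), sq_nonneg r]

theorem continuous_kerK (hr0 : 0 < r) (hr1 : r < 1) : Continuous (kerK r) :=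
  (by fun_prop : Continuous fun u => 2 * r ^ 2 * (1 - r ^ 4) * sin u).div (by fun_prop)
    fun u => (pow_pos (kerK_denom_pos hr0 hr1 u) 2).ne'

theorem kerK_periodic : Periodic (kerK r) (2 * π) := fun u => by
  simp only [kerK, sin_add_two_pi, cos_add_two_pi]

theorem kerK_neg (u : ℝ) : kerK r (-u) = -kerK r u := by
  simp only [kerK, sin_neg, cos_neg, mul_neg, neg_div]

theorem countable_setOf_kerK_mul_cos_eq_zero (hr0 : 0 < r) (hr1 : r < 1) :
    {u | kerK r u * cos u = 0}.Countable := by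
  refine (countable_range fun n : ℤ => n * (π / 2)).mono fun u hu => ?_
  have hcoef : 2 * r ^ 2 * (1 - r ^ 4) ≠ 0 := by
    have : r ^ 4 < 1 := pow_lt_one₀ hr0.le hr1 (by norm_num)
    have : 0 < 2 * r ^ 2 * (1 - r ^ 4) := by nlinarith [pow_pos hr0 2]
    exact this.ne'
  have hsin2 : sin (2 * u) = 0 := by
    simp only [mem_ofPred_eq, kerK, mul_eq_zero, div_eq_zero_iff, hcoef, false_or,
      pow_eq_zero_iff two_ne_zero, (kerK_denom_pos hr0 hr1 u).ne', or_false] at hu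
    rw [sin_two_mul]
    rcases hu with h | h <;> simp [h]
  obtain ⟨n, hn⟩ := sin_eq_zero_iff.mp hsin2
  exact ⟨n, by linarith⟩

end Kernel

theorem periodic_cancellation
    (ξ : ℝ → ℝ) (hξ : ∀ t : ℝ, ξ (t + 2 * Real.pi) = ξ t + 2 * Real.pi)
    (r : ℝ) (hr0 : 0 < r) (hr1 : r < 1) :
    ∫ t in (0 : ℝ)..(2 * Real.pi),
        ∫ α in (0 : ℝ)..(2 * Real.pi),
          kerK r α * (ξ (α + t) - ξ t - α) * Real.cos α
      = 0 := by
  set g : ℝ → ℝ := fun u => kerK r u * cos u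
  have hg : Continuous g := (continuous_kerK hr0 hr1).mul continuous_cos
  have hgp : Periodic g (2 * π) := kerK_periodic.mul cos_periodic
  have hg0 : ∫ u in (0 : ℝ)..2 * π, g u = 0 :=
    hgp.intervalIntegral_eq_zero_of_odd fun u => by simp only [g, kerK_neg, cos_neg, neg_mul]
  have hζ : Periodic (fun s => ξ s - s) (2 * π) := fun s => by simp only [hξ]; ring
  calc _ = ∫ t in (0 : ℝ)..2 * π, ∫ α in (0 : ℝ)..2 * π,
        g α * ((ξ (α + t) - (α + t)) - (ξ t - t)) :=
        intervalIntegral.integral_congr fun t _ => intervalIntegral.integral_congr fun α _ => by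
          simp only [g]; ring
    _ = ∫ t in (0 : ℝ)..2 * π, ∫ s in (0 : ℝ)..2 * π, g (s - t) * (ξ s - s) :=
        intervalIntegral.integral_congr fun t _ =>
          intervalIntegral_mul_increment_eq hgp hζ (hg.intervalIntegrable _ _) hg0 t
    _ = 0 := integral_integral_mul_comp_sub_eq_zero two_pi_pos hg hgp hg0
        (countable_setOf_kerK_mul_cos_eq_zero hr0 hr1)
end

section
/- Define H(α, β) = sin α + (β − α) cos α − sin β and, for r ∈ (0,1), 𝒦_r(u) = 2r²(1 − r⁴) sin u / (1 − 2r² cos u + r⁴)². Then for all (α, β) ∈ [0,2π] × [0,2π], the identity 𝒦_r(α)·H(α, β) + 𝒦_r(2π − α)·H(2π − α, β) = 2·𝒦_r(α)·H(α, π) holds, and this common value is nonnegative. -/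
/-- The tangent-line defect of the sine function. -/
noncomputable def Hfun (α β : ℝ) : ℝ :=
  Real.sin α + (β - α) * Real.cos α - Real.sin β

lemma fAnti : AntitoneOn (fun x : ℝ => Real.sin x + (Real.pi - x) * Real.cos x)
    (Set.Icc 0 (2 * Real.pi)) := by
  apply antitoneOn_of_deriv_nonpos (convex_Icc _ _)
  · fun_prop
  · intro x hx
    apply DifferentiableAt.differentiableWithinAt
    fun_prop
  · intro x hx
    rw [interior_Icc, Set.mem_Ioo] at hx
    have hd : HasDerivAt (fun x : ℝ => Real.sin x + (Real.pi - x) * Real.cos x)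
        (Real.cos x + ((-1) * Real.cos x + (Real.pi - x) * (-Real.sin x))) x := by
      exact (Real.hasDerivAt_sin x).add
        ((((hasDerivAt_id x).const_sub Real.pi).mul (Real.hasDerivAt_cos x)))
    rw [hd.deriv]
    have : Real.cos x + (-1 * Real.cos x + (Real.pi - x) * -Real.sin x)
        = -((Real.pi - x) * Real.sin x) := by ring
    rw [this]
    rcases le_or_gt x Real.pi with h | h
    · have hs : 0 ≤ Real.sin x := Real.sin_nonneg_of_nonneg_of_le_pi hx.1.le h
      nlinarith
    · have hs : Real.sin x ≤ 0 := by
        have : Real.sin x = -Real.sin (x - Real.pi) := by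
          rw [Real.sin_sub, Real.sin_pi, Real.cos_pi]; ring
        rw [this]
        have : 0 ≤ Real.sin (x - Real.pi) :=
          Real.sin_nonneg_of_nonneg_of_le_pi (by linarith) (by linarith)
        linarith
      nlinarith

lemma key (α : ℝ) (hα : α ∈ Set.Icc 0 (2 * Real.pi)) :
    0 ≤ Real.sin α * (Real.sin α + (Real.pi - α) * Real.cos α) := by
  obtain ⟨h0, h2⟩ := hα
  have hπ : Real.pi ∈ Set.Icc 0 (2 * Real.pi) := by
    constructor <;> nlinarith [Real.pi_pos]
  have hfπ : Real.sin Real.pi + (Real.pi - Real.pi) * Real.cos Real.pi = 0 := by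
    simp
  rcases le_or_gt α Real.pi with h | h
  · have hs : 0 ≤ Real.sin α := Real.sin_nonneg_of_nonneg_of_le_pi h0 h
    have hf := fAnti ⟨h0, h2⟩ hπ h
    simp only [Real.sin_pi, Real.cos_pi, sub_self, zero_mul, add_zero, zero_add] at hf
    exact mul_nonneg hs hf
  · have hs : Real.sin α ≤ 0 := by
      have he : Real.sin α = -Real.sin (α - Real.pi) := by
        rw [Real.sin_sub, Real.sin_pi, Real.cos_pi]; ring
      rw [he]
      have : 0 ≤ Real.sin (α - Real.pi) :=
        Real.sin_nonneg_of_nonneg_of_le_pi (by linarith) (by linarith)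
      linarith
    have hf := fAnti hπ ⟨h0, h2⟩ h.le
    simp only [Real.sin_pi, Real.cos_pi, sub_self, zero_mul, add_zero, zero_add] at hf
    nlinarith

theorem symmetric_sum_identity
    (r : ℝ) (hr0 : 0 < r) (hr1 : r < 1)
    (α β : ℝ) (hα : α ∈ Set.Icc 0 (2 * Real.pi)) (hβ : β ∈ Set.Icc 0 (2 * Real.pi)) :
    kerK r α * Hfun α β + kerK r (2 * Real.pi - α) * Hfun (2 * Real.pi - α) β
        = 2 * kerK r α * Hfun α Real.pi ∧
    0 ≤ 2 * kerK r α * Hfun α Real.pi := by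
  have hsin : Real.sin (2 * Real.pi - α) = -Real.sin α := by
    rw [Real.sin_sub, Real.sin_two_pi, Real.cos_two_pi]; ring
  have hcos : Real.cos (2 * Real.pi - α) = Real.cos α := by
    rw [Real.cos_sub, Real.sin_two_pi, Real.cos_two_pi]; ring
  constructor
  · unfold kerK Hfun
    rw [hsin, hcos, Real.sin_pi]
    ring
  · have hr4 : r ^ 4 < 1 := pow_lt_one₀ hr0.le hr1 (by norm_num)
    have hC : 0 ≤ 2 * r ^ 2 * (1 - r ^ 4) := by nlinarith
    have heq : 2 * kerK r α * Hfun α Real.pi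
        = 2 * (2 * r ^ 2 * (1 - r ^ 4))
          * (Real.sin α * (Real.sin α + (Real.pi - α) * Real.cos α))
          / (1 - 2 * r ^ 2 * Real.cos α + r ^ 4) ^ 2 := by
      unfold kerK Hfun
      rw [Real.sin_pi]
      ring
    rw [heq]
    exact div_nonneg (mul_nonneg (by linarith) (key α hα)) (sq_nonneg _)
end

section
/- Define H(α, β) = sin α + (β − α) cos α − sin β and, for r ∈ (0,1), 𝒦_r(u) = 2r²(1 − r⁴) sin u / (1 − 2r² cos u + r⁴)². Then 𝒦_r(α)·H(α, β) ≥ 0 for all (α, β) ∈ [0,2π] × [0,2π] lying outside the two open triangles T₁ = {(α,β) : 0 < α < π, 2π − α < β ≤ 2π} and T₂ = {(α,β) : π < α < 2π, 0 ≤ β < 2π − α}. -/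
open Real Set

lemma cos_le_cos_of_add_le_two_pi {x y : ℝ} (hx : 0 ≤ x) (hxy : x ≤ y) (h : x + y ≤ 2 * π) :
    cos y ≤ cos x := by
  have hsum : 0 ≤ sin ((y + x) / 2) := sin_nonneg_of_nonneg_of_le_pi (by linarith) (by linarith)
  have hdiff : 0 ≤ sin ((y - x) / 2) :=
    sin_nonneg_of_nonneg_of_le_pi (by linarith) (by linarith [pi_pos])
  nlinarith [cos_sub_cos y x]

lemma Hfun_self (α : ℝ) : Hfun α α = 0 := by
  simp [Hfun]

lemma hasDerivAt_Hfun (α t : ℝ) : HasDerivAt (Hfun α) (cos α - cos t) t := by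
  have hlin : HasDerivAt (fun s => (s - α) * cos α) (1 * cos α) t :=
    ((hasDerivAt_id t).sub_const α).mul_const (cos α)
  rw [one_mul] at hlin
  exact (hlin.const_add (sin α)).sub (hasDerivAt_sin t)

lemma continuous_Hfun (α : ℝ) : Continuous (Hfun α) := by
  unfold Hfun
  fun_prop

lemma Hfun_nonneg {α β : ℝ} (hα0 : 0 ≤ α) (hαπ : α ≤ π) (hβ0 : 0 ≤ β) (hβ : β ≤ 2 * π - α) :
    0 ≤ Hfun α β := by
  rw [← Hfun_self α]
  rcases le_total β α with hβα | hαβ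
  · have hanti : AntitoneOn (Hfun α) (Icc 0 α) := by
      refine antitoneOn_of_hasDerivWithinAt_nonpos (convex_Icc 0 α)
        (continuous_Hfun α).continuousOn (fun t _ => (hasDerivAt_Hfun α t).hasDerivWithinAt) ?_
      intro t ht
      obtain ⟨ht0, htα⟩ : t ∈ Ioo 0 α := by rwa [interior_Icc] at ht
      linarith [cos_le_cos_of_add_le_two_pi ht0.le htα.le (by linarith)]
    exact hanti ⟨hβ0, hβα⟩ ⟨hα0, le_rfl⟩ hβα
  · have hmono : MonotoneOn (Hfun α) (Icc α (2 * π - α)) := by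
      refine monotoneOn_of_hasDerivWithinAt_nonneg (convex_Icc α (2 * π - α))
        (continuous_Hfun α).continuousOn (fun t _ => (hasDerivAt_Hfun α t).hasDerivWithinAt) ?_
      intro t ht
      obtain ⟨hαt, ht⟩ : t ∈ Ioo α (2 * π - α) := by rwa [interior_Icc] at ht
      linarith [cos_le_cos_of_add_le_two_pi hα0 hαt.le (by linarith)]
    exact hmono ⟨le_rfl, by linarith⟩ ⟨hαβ, hβ⟩ hαβ

lemma Hfun_two_pi_sub (α β : ℝ) : Hfun (2 * π - α) (2 * π - β) = -Hfun α β := by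
  simp only [Hfun, sin_two_pi_sub, cos_two_pi_sub]
  ring

lemma Hfun_nonpos {α β : ℝ} (hπα : π ≤ α) (hα : α ≤ 2 * π) (hβ0 : 2 * π - α ≤ β)
    (hβ : β ≤ 2 * π) : Hfun α β ≤ 0 := by
  have := Hfun_nonneg (α := 2 * π - α) (β := 2 * π - β)
    (by linarith) (by linarith) (by linarith) (by linarith)
  rw [Hfun_two_pi_sub] at this
  linarith

lemma sin_nonpos_of_pi_le_of_le_two_pi {x : ℝ} (hπx : π ≤ x) (hx : x ≤ 2 * π) : sin x ≤ 0 := by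
  rw [← sin_sub_two_pi]
  exact sin_nonpos_of_nonpos_of_neg_pi_le (by linarith) (by linarith)

lemma sin_mul_Hfun_nonneg {α β : ℝ} (hα : α ∈ Icc 0 (2 * π)) (hβ : β ∈ Icc 0 (2 * π))
    (hT1 : ¬ (0 < α ∧ α < π ∧ 2 * π - α < β ∧ β ≤ 2 * π))
    (hT2 : ¬ (π < α ∧ α < 2 * π ∧ 0 ≤ β ∧ β < 2 * π - α)) :
    0 ≤ sin α * Hfun α β := by
  by_cases hsin : sin α = 0
  · simp [hsin]
  have hα0 : 0 < α := hα.1.lt_of_ne (by rintro rfl; simp at hsin)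
  have hα2 : α < 2 * π := hα.2.lt_of_ne (by rintro rfl; simp at hsin)
  rcases lt_trichotomy α π with hαπ | rfl | hπα
  · have hβle : β ≤ 2 * π - α := by
      by_contra! h
      exact hT1 ⟨hα0, hαπ, h, hβ.2⟩
    exact mul_nonneg (sin_nonneg_of_nonneg_of_le_pi hα.1 hαπ.le)
      (Hfun_nonneg hα.1 hαπ.le hβ.1 hβle)
  · simp at hsin
  · have hβge : 2 * π - α ≤ β := by
      by_contra! h
      exact hT2 ⟨hπα, hα2, hβ.1, h⟩
    exact mul_nonneg_of_nonpos_of_nonpos (sin_nonpos_of_pi_le_of_le_two_pi hπα.le hα.2)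
      (Hfun_nonpos hπα.le hα.2 hβge hβ.2)

lemma kerK_mul_nonneg {r u x : ℝ} (hr : r ^ 4 ≤ 1) (h : 0 ≤ sin u * x) : 0 ≤ kerK r u * x := by
  have hK : kerK r u * x
      = 2 * r ^ 2 * (1 - r ^ 4) * (sin u * x) / (1 - 2 * r ^ 2 * cos u + r ^ 4) ^ 2 := by
    unfold kerK
    ring
  rw [hK]
  have hcoeff : 0 ≤ 2 * r ^ 2 * (1 - r ^ 4) := by
    have : 0 ≤ 1 - r ^ 4 := sub_nonneg.2 hr
    positivity
  exact div_nonneg (mul_nonneg hcoeff h) (sq_nonneg _)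

theorem pointwise_nonneg_outside_triangles
    (r : ℝ) (hr0 : 0 < r) (hr1 : r < 1)
    (α β : ℝ) (hα : α ∈ Set.Icc 0 (2 * Real.pi)) (hβ : β ∈ Set.Icc 0 (2 * Real.pi))
    (hT1 : ¬ (0 < α ∧ α < Real.pi ∧ 2 * Real.pi - α < β ∧ β ≤ 2 * Real.pi))
    (hT2 : ¬ (Real.pi < α ∧ α < 2 * Real.pi ∧ 0 ≤ β ∧ β < 2 * Real.pi - α)) :
    0 ≤ kerK r α * Hfun α β :=
  kerK_mul_nonneg (pow_le_one₀ hr0.le hr1.le) (sin_mul_Hfun_nonneg hα hβ hT1 hT2)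
end

section
/- Define H(α, β) = sin α + (β − α) cos α − sin β and, for r ∈ (0,1), 𝒦_r(u) = 2r²(1 − r⁴) sin u / (1 − 2r² cos u + r⁴)². Then for every nondecreasing function Γ : [0,2π] → [0,2π], the integral ∫₀^{2π} 𝒦_r(α) · H(α, Γ(α)) dα is nonnegative. -/
open Real Set intervalIntegral

/-- If `cos t ≤ cos c` on `[x, y]`, then `Hfun c` is monotone from `x` to `y`. -/
lemma Hfun_mono_piece {c x y : ℝ} (hxy : x ≤ y)
    (h : ∀ t ∈ Icc x y, Real.cos t ≤ Real.cos c) : Hfun c x ≤ Hfun c y := by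
  have h1 : Real.sin y - Real.sin x ≤ (y - x) * Real.cos c := by
    have := intervalIntegral.integral_mono_on (μ := MeasureTheory.volume)
      (f := fun t => Real.cos t) (g := fun _ => Real.cos c) hxy
      (Real.continuous_cos.intervalIntegrable x y) (intervalIntegrable_const) h
    simpa [integral_cos, smul_eq_mul] using this
  simp only [Hfun]
  nlinarith

/-- If `cos c ≤ cos t` on `[x, y]`, then `Hfun c` is antitone from `x` to `y`. -/
lemma Hfun_anti_piece {c x y : ℝ} (hxy : x ≤ y)
    (h : ∀ t ∈ Icc x y, Real.cos c ≤ Real.cos t) : Hfun c y ≤ Hfun c x := by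
  have h1 : (y - x) * Real.cos c ≤ Real.sin y - Real.sin x := by
    have := intervalIntegral.integral_mono_on (μ := MeasureTheory.volume)
      (f := fun _ => Real.cos c) (g := fun t => Real.cos t) hxy
      (intervalIntegrable_const) (Real.continuous_cos.intervalIntegrable x y) h
    simpa [integral_cos, smul_eq_mul] using this
  simp only [Hfun]
  nlinarith

lemma cos_le_of_mem_middle {α t : ℝ} (hα0 : 0 ≤ α) (hαπ : α ≤ Real.pi)
    (ht : t ∈ Icc α (2 * Real.pi - α)) : Real.cos t ≤ Real.cos α := by
  rcases le_or_gt t Real.pi with h | h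
  · exact Real.cos_le_cos_of_nonneg_of_le_pi hα0 h ht.1
  · have : Real.cos (2 * Real.pi - t) ≤ Real.cos α := by
      apply Real.cos_le_cos_of_nonneg_of_le_pi hα0 (by linarith)
      have := ht.2; linarith
    rwa [Real.cos_two_pi_sub] at this

lemma cos_ge_of_mem_left {α t : ℝ} (ht0 : 0 ≤ t) (htα : t ≤ α) (hαπ : α ≤ Real.pi) :
    Real.cos α ≤ Real.cos t :=
  Real.cos_le_cos_of_nonneg_of_le_pi ht0 hαπ htα

lemma cos_ge_of_mem_right {α t : ℝ} (hα0 : 0 ≤ α) (hαπ : α ≤ Real.pi)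
    (ht : 2 * Real.pi - α ≤ t) (ht2 : t ≤ 2 * Real.pi) : Real.cos α ≤ Real.cos t := by
  have : Real.cos α ≤ Real.cos (2 * Real.pi - t) :=
    Real.cos_le_cos_of_nonneg_of_le_pi (by linarith) hαπ (by linarith)
  rwa [Real.cos_two_pi_sub] at this

/-- Key pointwise inequality. -/
lemma key_ineq {α γ β : ℝ} (hα0 : 0 ≤ α) (hαπ : α ≤ Real.pi)
    (hγ0 : 0 ≤ γ) (hγβ : γ ≤ β) (hβ : β ≤ 2 * Real.pi) :
    Hfun (2 * Real.pi - α) β ≤ Hfun α γ := by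
  have hπ : (0 : ℝ) < Real.pi := Real.pi_pos
  set m : ℝ := 2 * Real.pi - α with hm
  have hαm : α ≤ m := by simp only [hm]; linarith
  have hFα : Hfun α α = 0 := by simp [Hfun]
  -- identity : Hfun m β = Hfun α β - Hfun α m
  have hid : Hfun m β = Hfun α β - Hfun α m := by
    simp only [Hfun, hm, Real.sin_two_pi_sub, Real.cos_two_pi_sub]
    ring
  rw [hid]
  -- suffices F β ≤ F γ + F m
  rw [sub_le_iff_le_add']
  -- D : 0 ≤ Hfun α m
  have hD : 0 ≤ Hfun α m := by
    have := Hfun_mono_piece (c := α) hαm (fun t ht => cos_le_of_mem_middle hα0 hαπ ht)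
    linarith [hFα]
  -- F γ ≥ 0 whenever γ ≤ m
  have hFnonneg : ∀ x, 0 ≤ x → x ≤ m → 0 ≤ Hfun α x := by
    intro x hx0 hxm
    rcases le_or_gt x α with h | h
    · have := Hfun_anti_piece (c := α) h
        (fun t ht => cos_ge_of_mem_left (le_trans hx0 ht.1) ht.2 hαπ)
      linarith [hFα]
    · have := Hfun_mono_piece (c := α) h.le
        (fun t ht => cos_le_of_mem_middle hα0 hαπ ⟨ht.1, le_trans ht.2 hxm⟩)
      linarith [hFα]
  rcases le_or_gt β α with hc1 | hc1
  · -- β ≤ α : F γ ≥ F β , F m ≥ 0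
    have h1 : Hfun α β ≤ Hfun α γ :=
      Hfun_anti_piece (c := α) hγβ
        (fun t ht => cos_ge_of_mem_left (le_trans hγ0 ht.1) (le_trans ht.2 hc1) hαπ)
    linarith
  rcases le_or_gt β m with hc2 | hc2
  · -- α ≤ β ≤ m : F β ≤ F m , F γ ≥ 0
    have h1 : Hfun α β ≤ Hfun α m :=
      Hfun_mono_piece (c := α) hc2
        (fun t ht => cos_le_of_mem_middle hα0 hαπ ⟨le_trans hc1.le ht.1, ht.2⟩)
    have h2 : 0 ≤ Hfun α γ := hFnonneg γ hγ0 (le_trans hγβ hc2)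
    linarith
  · -- m < β
    rcases le_or_gt γ m with hc3 | hc3
    · -- F γ ≥ 0 , F β ≤ F m
      have h1 : Hfun α β ≤ Hfun α m :=
        Hfun_anti_piece (c := α) hc2.le
          (fun t ht => cos_ge_of_mem_right hα0 hαπ ht.1 (le_trans ht.2 hβ))
      have h2 : 0 ≤ Hfun α γ := hFnonneg γ hγ0 hc3
      linarith
    · -- m < γ ≤ β : F β ≤ F γ , F m ≥ 0
      have h1 : Hfun α β ≤ Hfun α γ :=
        Hfun_anti_piece (c := α) hγβ
          (fun t ht => cos_ge_of_mem_right hα0 hαπ (le_trans hc3.le ht.1)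
            (le_trans ht.2 hβ))
      linarith

theorem integral_nonneg_for_monotone
    (r : ℝ) (hr0 : 0 < r) (hr1 : r < 1)
    (Γ : ℝ → ℝ)
    (hmono : MonotoneOn Γ (Set.Icc 0 (2 * Real.pi)))
    (hmaps : Set.MapsTo Γ (Set.Icc 0 (2 * Real.pi)) (Set.Icc 0 (2 * Real.pi))) :
    0 ≤ ∫ α in (0 : ℝ)..(2 * Real.pi), kerK r α * Hfun α (Γ α) := by
  have hπ : (0 : ℝ) < Real.pi := Real.pi_pos
  set g : ℝ → ℝ := fun α => kerK r α * Hfun α (Γ α) with hg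
  by_cases hint : IntervalIntegrable g MeasureTheory.volume 0 (2 * Real.pi)
  · -- integrability on subintervals
    have h1 : IntervalIntegrable g MeasureTheory.volume 0 Real.pi :=
      hint.mono_set (by
        rw [Set.uIcc_of_le (by linarith), Set.uIcc_of_le (by linarith)]
        exact Set.Icc_subset_Icc le_rfl (by linarith))
    have h2 : IntervalIntegrable g MeasureTheory.volume Real.pi (2 * Real.pi) :=
      hint.mono_set (by
        rw [Set.uIcc_of_le (by linarith), Set.uIcc_of_le (by linarith)]
        exact Set.Icc_subset_Icc (by linarith) le_rfl)
    have h3 : IntervalIntegrable (fun x => g (2 * Real.pi - x)) MeasureTheory.volume 0 Real.pi := by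
      have h := (h2.comp_sub_left (2 * Real.pi)).symm
      rwa [show 2 * Real.pi - 2 * Real.pi = (0:ℝ) by ring,
        show 2 * Real.pi - Real.pi = Real.pi by ring] at h
    have hsplit : (∫ α in (0:ℝ)..(2 * Real.pi), g α)
        = (∫ α in (0:ℝ)..Real.pi, g α) + ∫ α in Real.pi..(2 * Real.pi), g α :=
      (intervalIntegral.integral_add_adjacent_intervals h1 h2).symm
    have hsub : (∫ α in Real.pi..(2 * Real.pi), g α)
        = ∫ x in (0:ℝ)..Real.pi, g (2 * Real.pi - x) := by
      rw [intervalIntegral.integral_comp_sub_left g (2 * Real.pi),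
        show 2 * Real.pi - Real.pi = Real.pi by ring, sub_zero]
    have hcomb : (∫ α in (0:ℝ)..(2 * Real.pi), g α)
        = ∫ x in (0:ℝ)..Real.pi, (g x + g (2 * Real.pi - x)) := by
      rw [hsplit, hsub, intervalIntegral.integral_add h1 h3]
    rw [hcomb]
    apply intervalIntegral.integral_nonneg (by linarith)
    intro u hu
    obtain ⟨hu0, huπ⟩ := hu
    -- the reflected kernel
    have hker_refl : kerK r (2 * Real.pi - u) = -kerK r u := by
      simp only [kerK, Real.sin_two_pi_sub, Real.cos_two_pi_sub]
      ring
    have hmem1 : u ∈ Set.Icc 0 (2 * Real.pi) := ⟨hu0, by linarith⟩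
    have hmem2 : (2 * Real.pi - u) ∈ Set.Icc 0 (2 * Real.pi) := ⟨by linarith, by linarith⟩
    have hΓle : Γ u ≤ Γ (2 * Real.pi - u) := hmono hmem1 hmem2 (by linarith)
    have hΓ1 := hmaps hmem1
    have hΓ2 := hmaps hmem2
    have hkey : Hfun (2 * Real.pi - u) (Γ (2 * Real.pi - u)) ≤ Hfun u (Γ u) :=
      key_ineq hu0 huπ hΓ1.1 hΓle hΓ2.2
    have hker_nonneg : 0 ≤ kerK r u := by
      apply div_nonneg _ (sq_nonneg _)
      have hs : 0 ≤ Real.sin u := Real.sin_nonneg_of_nonneg_of_le_pi hu0 huπ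
      have h4 : (0:ℝ) ≤ 1 - r ^ 4 := by
        have : r ^ 4 ≤ 1 := pow_le_one₀ hr0.le hr1.le
        linarith
      have : (0:ℝ) ≤ 2 * r ^ 2 * (1 - r ^ 4) := by positivity
      exact mul_nonneg this hs
    have : g u + g (2 * Real.pi - u)
        = kerK r u * (Hfun u (Γ u) - Hfun (2 * Real.pi - u) (Γ (2 * Real.pi - u))) := by
      simp only [hg, hker_refl]; ring
    rw [this]
    exact mul_nonneg hker_nonneg (by linarith)
  · rw [intervalIntegral.integral_undef hint]
end

section
/- Define H(α, β) = sin α + (β − α) cos α − sin β and, for r ∈ (0,1), 𝒦_r(u) = 2r²(1 − r⁴) sin u / (1 − 2r² cos u + r⁴)². For any nondecreasing function Γ : [0,2π] → [0,2π], the integral ∫₀^{2π} 𝒦_r(α) · H(α, Γ(α)) dα is unchanged when Γ is replaced by the reflected function Γ̃(α) = 2π − Γ(2π − α). -/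
theorem integral_invariant_under_reflection
    (r : ℝ) (hr0 : 0 < r) (hr1 : r < 1)
    (Γ : ℝ → ℝ)
    (hmono : MonotoneOn Γ (Set.Icc 0 (2 * Real.pi)))
    (hmaps : Set.MapsTo Γ (Set.Icc 0 (2 * Real.pi)) (Set.Icc 0 (2 * Real.pi))) :
    ∫ α in (0 : ℝ)..(2 * Real.pi), kerK r α * Hfun α (Γ α)
      = ∫ α in (0 : ℝ)..(2 * Real.pi),
          kerK r α * Hfun α (2 * Real.pi - Γ (2 * Real.pi - α)) := by
  have key : ∀ x : ℝ,
      kerK r x * Hfun x (Γ x)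
        = kerK r (2 * Real.pi - x) *
            Hfun (2 * Real.pi - x) (2 * Real.pi - Γ (2 * Real.pi - (2 * Real.pi - x))) := by
    intro x
    have hx : 2 * Real.pi - (2 * Real.pi - x) = x := by ring
    rw [hx]
    simp only [kerK, Hfun, Real.sin_sub, Real.cos_sub, Real.sin_two_pi, Real.cos_two_pi]
    ring
  have h := intervalIntegral.integral_comp_sub_left
      (fun x => kerK r x * Hfun x (2 * Real.pi - Γ (2 * Real.pi - x))) (2 * Real.pi)
      (a := (0 : ℝ)) (b := 2 * Real.pi)
  simp only [sub_self, sub_zero] at h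
  calc ∫ α in (0 : ℝ)..(2 * Real.pi), kerK r α * Hfun α (Γ α)
      = ∫ α in (0 : ℝ)..(2 * Real.pi),
          kerK r (2 * Real.pi - α) *
            Hfun (2 * Real.pi - α) (2 * Real.pi - Γ (2 * Real.pi - (2 * Real.pi - α))) := by
        exact intervalIntegral.integral_congr (fun x _ => key x)
    _ = ∫ α in (0 : ℝ)..(2 * Real.pi),
          kerK r α * Hfun α (2 * Real.pi - Γ (2 * Real.pi - α)) := h
end
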